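/- arXiv:2509.10280 — 2 statements merged into one kernel-verified Lean document; each statement's English description precedes it below -/
import Mathlib

section
/- Let K ≥ 1, let N_1,…,N_K > 0 be the per-user noise-plus-jamming power levels, and let P > 0 be the total base-station power budget. Suppose η ∈ ℝ is a water level such that the powers p_k = max(η − N_k, 0) satisfy Σ_{k=1}^K p_k = P. Then (p_1,…,p_K) is optimal for the water-filling problem: for every (q_1,…,q_K) with q_k ≥ 0 for all k and Σ_{k=1}^K q_k ≤ P, it holds that Σ_{k=1}^K log₂(1 + q_k / N_k) ≤ Σ_{k=1}^K log₂(1 + p_k / N_k). -/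
/-!
The sum-rate is concave, so it lies below its tangent hyperplane at `p`. The water-filling
condition is exactly the KKT condition: the marginal rate `1 / (N_k + p_k)` equals `1 / η` where
`p_k > 0` and is at most `1 / η` where `p_k = 0`. Hence the tangent bound gives
`rate q ≤ rate p + (∑ q - ∑ p) / η`, and `∑ q ≤ P = ∑ p` finishes the proof.
-/

open Finset Real

theorem Real.log_le_log_add_sub_div {x y : ℝ} (hx : 0 < x) (hy : 0 < y) :
    log x ≤ log y + (x - y) / y := by
  have h := log_le_sub_one_of_pos (div_pos hx hy)
  rw [log_div hx.ne' hy.ne', div_sub_one hy.ne'] at h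
  linarith

theorem log_one_add_div_le_waterFilling {N η q : ℝ} (hN : 0 < N) (hη : 0 < η) (hq : 0 ≤ q) :
    log (1 + q / N) ≤ log (1 + max (η - N) 0 / N) + (q - max (η - N) 0) / η := by
  set p := max (η - N) 0 with hp
  have hp₀ : 0 ≤ p := le_max_right _ _
  have tangent : log (1 + q / N) ≤ log (1 + p / N) + (q - p) / (N + p) := by
    have h := log_le_log_add_sub_div (x := 1 + q / N) (y := 1 + p / N)
      (by positivity) (by positivity)
    have hslope : (1 + q / N - (1 + p / N)) / (1 + p / N) = (q - p) / (N + p) := by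
      field_simp
      ring
    rwa [hslope] at h
  have marginal : (q - p) / (N + p) ≤ (q - p) / η := by
    rcases le_total (η - N) 0 with h | h
    · rw [hp, max_eq_right h, add_zero, sub_zero]
      exact div_le_div_of_nonneg_left hq hη (by linarith)
    · rw [hp, max_eq_left h, add_sub_cancel]
  linarith

theorem pos_of_sum_max_sub_pos {ι : Type*} {s : Finset ι} {N : ι → ℝ} {η : ℝ}
    (hN : ∀ k ∈ s, 0 ≤ N k) (h : 0 < ∑ k ∈ s, max (η - N k) 0) : 0 < η := by
  by_contra! hη
  have hzero : ∀ k ∈ s, max (η - N k) 0 = 0 := fun k hk =>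
    max_eq_right (by linarith [hN k hk])
  rw [sum_eq_zero hzero] at h
  exact h.false

theorem sum_log_one_add_div_le_waterFilling {ι : Type*} {s : Finset ι} {N q : ι → ℝ} {η : ℝ}
    (hN : ∀ k ∈ s, 0 < N k) (hη : 0 < η) (hq : ∀ k ∈ s, 0 ≤ q k)
    (hbudget : ∑ k ∈ s, q k ≤ ∑ k ∈ s, max (η - N k) 0) :
    ∑ k ∈ s, log (1 + q k / N k) ≤ ∑ k ∈ s, log (1 + max (η - N k) 0 / N k) :=
  calc ∑ k ∈ s, log (1 + q k / N k)
      ≤ ∑ k ∈ s, (log (1 + max (η - N k) 0 / N k) + (q k - max (η - N k) 0) / η) :=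
        sum_le_sum fun k hk => log_one_add_div_le_waterFilling (hN k hk) hη (hq k hk)
    _ = ∑ k ∈ s, log (1 + max (η - N k) 0 / N k)
          + (∑ k ∈ s, q k - ∑ k ∈ s, max (η - N k) 0) / η := by
        rw [sum_add_distrib, ← sum_div, sum_sub_distrib]
    _ ≤ ∑ k ∈ s, log (1 + max (η - N k) 0 / N k) := by
        have : (∑ k ∈ s, q k - ∑ k ∈ s, max (η - N k) 0) / η ≤ 0 :=
          div_nonpos_of_nonpos_of_nonneg (by linarith) hη.le
        linarith

theorem water_filling_optimality_general
    (K : ℕ)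
    (N : Fin K → ℝ) (hN : ∀ k, 0 < N k)
    (P : ℝ) (hP : 0 < P)
    (η : ℝ)
    (p : Fin K → ℝ) (hp : ∀ k, p k = max (η - N k) 0)
    (hsum : ∑ k, p k = P) :
    ∀ q : Fin K → ℝ, (∀ k, 0 ≤ q k) → (∑ k, q k) ≤ P →
      ∑ k, Real.logb 2 (1 + q k / N k) ≤ ∑ k, Real.logb 2 (1 + p k / N k) := by
  intro q hq hqP
  obtain rfl : p = fun k => max (η - N k) 0 := funext hp
  have hη : 0 < η := pos_of_sum_max_sub_pos (fun k _ => (hN k).le) (hsum ▸ hP)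
  simp only [logb, ← sum_div]
  exact div_le_div_of_nonneg_right
    (sum_log_one_add_div_le_waterFilling (fun k _ => hN k) hη (fun k _ => hq k) (hsum ▸ hqP))
    (log_nonneg one_le_two)

/-- Optimality of the water-filling power allocation: if `p_k = max(η − N_k, 0)`
exhausts the power budget `P`, then `p` maximizes the sum-rate
`Σ_k log₂(1 + p_k/N_k)` among all nonnegative allocations with total power at
most `P`. -/
theorem water_filling_optimality
    (K : ℕ) (hK : 1 ≤ K)
    (N : Fin K → ℝ) (hN : ∀ k, 0 < N k)
    (P : ℝ) (hP : 0 < P)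
    (η : ℝ)
    (p : Fin K → ℝ) (hp : ∀ k, p k = max (η - N k) 0)
    (hsum : ∑ k, p k = P) :
    ∀ q : Fin K → ℝ, (∀ k, 0 ≤ q k) → (∑ k, q k) ≤ P →
      ∑ k, Real.logb 2 (1 + q k / N k) ≤ ∑ k, Real.logb 2 (1 + p k / N k) :=
  water_filling_optimality_general K N hN P hP η p hp hsum
end

section
/- Let (𝒟, μ) be a measure space, G : 𝒟 → ℝ a measurable net marginal gain function, ρ_max > 0 a maximum density, Q > 0 a total mass, and τ ∈ ℝ a water level. Suppose ρ* : 𝒟 → ℝ is measurable with 0 ≤ ρ*(x) ≤ ρ_max for all x, ∫_𝒟 ρ* dμ = Q, ρ*(x) = ρ_max whenever G(x) > τ, and ρ*(x) = 0 whenever G(x) < τ, and suppose G·ρ* is integrable. Then ρ* maximizes the linear objective: for every measurable ρ : 𝒟 → ℝ with 0 ≤ ρ(x) ≤ ρ_max for all x, ∫_𝒟 ρ dμ = Q, and G·ρ integrable, it holds that ∫_𝒟 G(x) ρ(x) dμ(x) ≤ ∫_𝒟 G(x) ρ*(x) dμ(x). (Spatial water-filling optimality of the bang-bang density in equation (49).)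 -/
open MeasureTheory

/-- Spatial water-filling optimality of the bang-bang density: a feasible density
`ρ*` that equals `ρ_max` where `G > τ` and `0` where `G < τ` maximizes the linear
objective `∫ G ρ dμ` over all feasible densities with the same total mass `Q`. -/
theorem bang_bang_density_optimality
    {D : Type*} [MeasurableSpace D] (μ : Measure D)
    (G : D → ℝ) (hGmeas : Measurable G)
    (ρmax : ℝ) (hρmax : 0 < ρmax)
    (Q : ℝ) (hQ : 0 < Q)
    (τ : ℝ)
    (ρstar : D → ℝ) (hmeas : Measurable ρstar)
    (hbox : ∀ x, 0 ≤ ρstar x ∧ ρstar x ≤ ρmax)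
    (hmass : ∫ x, ρstar x ∂μ = Q)
    (hhi : ∀ x, τ < G x → ρstar x = ρmax)
    (hlo : ∀ x, G x < τ → ρstar x = 0)
    (hint : Integrable (fun x => G x * ρstar x) μ) :
    ∀ ρ : D → ℝ, Measurable ρ → (∀ x, 0 ≤ ρ x ∧ ρ x ≤ ρmax) →
      (∫ x, ρ x ∂μ) = Q → Integrable (fun x => G x * ρ x) μ →
      ∫ x, G x * ρ x ∂μ ≤ ∫ x, G x * ρstar x ∂μ := by
  intro ρ hρmeas hρbox hρmass hρint
  -- ρ and ρstar are integrable since their integrals are Q ≠ 0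
  have hρI : Integrable ρ μ := by
    by_contra h
    rw [integral_undef h] at hρmass
    exact hQ.ne' hρmass.symm
  have hρsI : Integrable ρstar μ := by
    by_contra h
    rw [integral_undef h] at hmass
    exact hQ.ne' hmass.symm
  -- key pointwise inequality
  have hpt : ∀ x, (G x - τ) * (ρ x - ρstar x) ≤ 0 := by
    intro x
    rcases lt_trichotomy (G x) τ with h | h | h
    · have h0 : ρstar x = 0 := hlo x h
      apply mul_nonpos_of_nonpos_of_nonneg
      · linarith
      · rw [h0]; linarith [(hρbox x).1]
    · simp [h]
    · have h0 : ρstar x = ρmax := hhi x h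
      apply mul_nonpos_of_nonneg_of_nonpos
      · linarith
      · rw [h0]; linarith [(hρbox x).2]
  -- integrability of the product
  have hI : Integrable (fun x => (G x - τ) * (ρ x - ρstar x)) μ := by
    have : (fun x => (G x - τ) * (ρ x - ρstar x)) =
        fun x => (G x * ρ x - τ * ρ x) - (G x * ρstar x - τ * ρstar x) := by
      funext x; ring
    rw [this]
    exact ((hρint.sub (hρI.const_mul τ)).sub (hint.sub (hρsI.const_mul τ)))
  have hle : ∫ x, (G x - τ) * (ρ x - ρstar x) ∂μ ≤ 0 :=
    integral_nonpos hpt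
  have heq : ∫ x, (G x - τ) * (ρ x - ρstar x) ∂μ =
      (∫ x, G x * ρ x ∂μ - τ * Q) - (∫ x, G x * ρstar x ∂μ - τ * Q) := by
    have : (fun x => (G x - τ) * (ρ x - ρstar x)) =
        fun x => (G x * ρ x - τ * ρ x) - (G x * ρstar x - τ * ρstar x) := by
      funext x; ring
    have h1 : Integrable (fun x => G x * ρ x - τ * ρ x) μ := hρint.sub (hρI.const_mul τ)
    have h2 : Integrable (fun x => G x * ρstar x - τ * ρstar x) μ := hint.sub (hρsI.const_mul τ)
    rw [this, integral_sub h1 h2,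
      integral_sub hρint (hρI.const_mul τ), integral_sub hint (hρsI.const_mul τ),
      integral_const_mul, integral_const_mul, hρmass, hmass]
  rw [heq] at hle
  linarith
end
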